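/- Suppose for each n, the probability mass function a_{n,k} (0 ≤ k ≤ n) satisfies a_{n,k} = binom(n,k) r^k (1-r)^{n-k} (1+ε_{n,k}) with sup_k |ε_{n,k}| → 0 and r ∈ (0,1) fixed. Then the variance V_n of the distribution a_{n,·} satisfies V_n = n r (1-r) (1 + o(1)) as n → ∞. -/
import Mathlib

open Filter

set_option maxHeartbeats 1000000 in
theorem stmt8 (r : ℝ) (hr0 : 0 < r) (hr1 : r < 1) (a ε : ℕ → ℕ → ℝ)
    (hnn : ∀ n k, k ≤ n → 0 ≤ a n k)
    (hsum : ∀ n, ∑ k ∈ Finset.range (n + 1), a n k = 1)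
    (hcomp : ∀ n k, k ≤ n →
      a n k = (n.choose k : ℝ) * r^k * (1 - r)^(n - k) * (1 + ε n k))
    (hε : ∀ δ : ℝ, 0 < δ → ∃ N, ∀ n ≥ N, ∀ k ≤ n, |ε n k| ≤ δ)
    (M V : ℕ → ℝ)
    (hM : ∀ n, M n = ∑ k ∈ Finset.range (n + 1), (k : ℝ) * a n k)
    (hV : ∀ n, V n = ∑ k ∈ Finset.range (n + 1), ((k : ℝ) - M n)^2 * a n k) :
    Tendsto (fun n => V n / (n * r * (1 - r))) atTop (nhds 1) := by
  have hr1' : (0:ℝ) < 1 - r := by linarith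
  set B : ℕ → ℕ → ℝ := fun n k => (n.choose k : ℝ) * r^k * (1-r)^(n-k) with hBdef
  have hBnn : ∀ n k, 0 ≤ B n k := by
    intro n k
    have : (0:ℝ) ≤ (n.choose k : ℝ) := Nat.cast_nonneg _
    positivity
  have hBeval : ∀ n k, (bernsteinPolynomial ℝ n k).eval r = B n k := by
    intro n k
    simp [bernsteinPolynomial, hBdef]
  have hB0 : ∀ n, ∑ k ∈ Finset.range (n+1), B n k = 1 := by
    intro n
    have := congrArg (Polynomial.eval r) (bernsteinPolynomial.sum ℝ n)
    simpa [Polynomial.eval_finset_sum, hBeval] using this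
  have hB1 : ∀ n, ∑ k ∈ Finset.range (n+1), (k:ℝ) * B n k = n * r := by
    intro n
    have := congrArg (Polynomial.eval r) (bernsteinPolynomial.sum_smul ℝ n)
    simpa [Polynomial.eval_finset_sum, hBeval, nsmul_eq_mul] using this
  have hB2 : ∀ n, ∑ k ∈ Finset.range (n+1), ((k:ℝ) - n*r)^2 * B n k = n*r*(1-r) := by
    intro n
    have := congrArg (Polynomial.eval r) (bernsteinPolynomial.variance ℝ n)
    simp only [Polynomial.eval_finset_sum, Polynomial.eval_mul, Polynomial.eval_pow,
      Polynomial.eval_sub, Polynomial.eval_smul, Polynomial.eval_natCast, Polynomial.eval_X,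
      Polynomial.eval_one, nsmul_eq_mul, hBeval] at this
    calc ∑ k ∈ Finset.range (n+1), ((k:ℝ) - n*r)^2 * B n k
        = ∑ k ∈ Finset.range (n+1), ((n:ℝ)*r - k)^2 * B n k := by
          refine Finset.sum_congr rfl fun k _ => ?_
          have h : ((k:ℝ) - n*r)^2 = ((n:ℝ)*r - k)^2 := by ring
          rw [h]
      _ = n*r*(1-r) := this
  -- per-n decomposition
  set T1 : ℕ → ℝ := fun n => ∑ k ∈ Finset.range (n+1), ((k:ℝ) - n*r) * B n k * ε n k with hT1
  set T2 : ℕ → ℝ := fun n => ∑ k ∈ Finset.range (n+1), ((k:ℝ) - n*r)^2 * B n k * ε n k with hT2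
  have ha : ∀ n, ∀ k ∈ Finset.range (n+1), a n k = B n k * (1 + ε n k) := by
    intro n k hk
    exact hcomp n k (Nat.lt_succ_iff.mp (Finset.mem_range.mp hk))
  have hzero : ∀ n, ∑ k ∈ Finset.range (n+1), ((k:ℝ) - n*r) * B n k = 0 := by
    intro n
    have h : ∀ k ∈ Finset.range (n+1), ((k:ℝ) - n*r) * B n k
        = (k:ℝ) * B n k - (n*r) * B n k := fun k _ => by ring
    rw [Finset.sum_congr rfl h, Finset.sum_sub_distrib, ← Finset.mul_sum, hB1, hB0]
    ring
  have h1 : ∀ n, ∑ k ∈ Finset.range (n+1), ((k:ℝ) - n*r) * a n k = M n - n*r := by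
    intro n
    have h : ∀ k ∈ Finset.range (n+1), ((k:ℝ) - n*r) * a n k
        = (k:ℝ) * a n k - (n*r) * a n k := fun k _ => by ring
    rw [Finset.sum_congr rfl h, Finset.sum_sub_distrib, ← Finset.mul_sum, hsum, hM]
    ring
  have hMμ : ∀ n, M n - n*r = T1 n := by
    intro n
    rw [← h1 n, hT1]
    simp only
    have h : ∀ k ∈ Finset.range (n+1), ((k:ℝ) - n*r) * a n k
        = ((k:ℝ) - n*r) * B n k + ((k:ℝ) - n*r) * B n k * ε n k := by
      intro k hk; rw [ha n k hk]; ring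
    rw [Finset.sum_congr rfl h, Finset.sum_add_distrib, hzero, zero_add]
  have hSV : ∀ n, ∑ k ∈ Finset.range (n+1), ((k:ℝ) - n*r)^2 * a n k
      = n*r*(1-r) + T2 n := by
    intro n
    have h2 : ∑ k ∈ Finset.range (n+1), ((k:ℝ) - n*r)^2 * a n k
        = ∑ k ∈ Finset.range (n+1), (((k:ℝ) - n*r)^2 * B n k + ((k:ℝ) - n*r)^2 * B n k * ε n k) := by
      refine Finset.sum_congr rfl fun k hk => ?_
      rw [ha n k hk]; ring
    rw [h2, Finset.sum_add_distrib, hB2, hT2]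
  have hVeq : ∀ n, V n = (n*r*(1-r) + T2 n) - (T1 n)^2 := by
    intro n
    have expand : ∀ k ∈ Finset.range (n+1), ((k:ℝ) - M n)^2 * a n k
        = ((k:ℝ) - n*r)^2 * a n k - (2*(M n - n*r)) * (((k:ℝ) - n*r) * a n k)
          + (M n - n*r)^2 * a n k := fun k _ => by ring
    rw [hV, Finset.sum_congr rfl expand, Finset.sum_add_distrib, Finset.sum_sub_distrib,
      ← Finset.mul_sum, ← Finset.mul_sum, h1, hSV, hsum, hMμ]
    ring
  -- bounds
  rw [Metric.tendsto_atTop]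
  intro e he
  set δ : ℝ := min (e/3) 1 with hδdef
  have hδpos : 0 < δ := lt_min (by linarith) one_pos
  have hδ1 : δ ≤ 1 := min_le_right _ _
  have hδe : δ ≤ e/3 := min_le_left _ _
  obtain ⟨N, hN⟩ := hε δ hδpos
  refine ⟨max N 1, fun n hn => ?_⟩
  have hnN : N ≤ n := le_trans (le_max_left _ _) hn
  have hn1 : 1 ≤ n := le_trans (le_max_right _ _) hn
  have hncast : (1:ℝ) ≤ (n:ℝ) := by exact_mod_cast hn1
  have hσpos : 0 < (n:ℝ)*r*(1-r) :=
    mul_pos (mul_pos (by linarith) hr0) hr1'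
  have hεb : ∀ k ∈ Finset.range (n+1), |ε n k| ≤ δ := fun k hk =>
    hN n hnN k (Nat.lt_succ_iff.mp (Finset.mem_range.mp hk))
  have hT2b : |T2 n| ≤ δ * ((n:ℝ)*r*(1-r)) := by
    calc |T2 n| ≤ ∑ k ∈ Finset.range (n+1), |((k:ℝ) - n*r)^2 * B n k * ε n k| :=
          Finset.abs_sum_le_sum_abs _ _
      _ ≤ ∑ k ∈ Finset.range (n+1), δ * (((k:ℝ) - n*r)^2 * B n k) := by
          refine Finset.sum_le_sum fun k hk => ?_
          rw [abs_mul, abs_mul, abs_of_nonneg (sq_nonneg ((k:ℝ) - n*r)),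
            abs_of_nonneg (hBnn n k)]
          have hA : 0 ≤ ((k:ℝ) - n*r)^2 * B n k :=
            mul_nonneg (sq_nonneg _) (hBnn n k)
          calc ((k:ℝ) - n*r)^2 * B n k * |ε n k|
              ≤ ((k:ℝ) - n*r)^2 * B n k * δ :=
                mul_le_mul_of_nonneg_left (hεb k hk) hA
            _ = δ * (((k:ℝ) - n*r)^2 * B n k) := by ring
      _ = δ * ((n:ℝ)*r*(1-r)) := by rw [← Finset.mul_sum, hB2]
  have hT1b : (T1 n)^2 ≤ δ^2 * ((n:ℝ)*r*(1-r)) := by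
    have hcs := Finset.sum_sq_le_sum_mul_sum_of_sq_eq_mul (Finset.range (n+1))
      (r := fun k => ((k:ℝ) - n*r) * B n k * ε n k)
      (f := fun k => ((k:ℝ) - n*r)^2 * B n k)
      (g := fun k => (ε n k)^2 * B n k)
      (fun k _ => mul_nonneg (sq_nonneg _) (hBnn n k))
      (fun k _ => mul_nonneg (sq_nonneg _) (hBnn n k))
      (fun k _ => by ring)
    have hg : ∑ k ∈ Finset.range (n+1), (ε n k)^2 * B n k ≤ δ^2 := by
      calc ∑ k ∈ Finset.range (n+1), (ε n k)^2 * B n k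
          ≤ ∑ k ∈ Finset.range (n+1), δ^2 * B n k := by
            refine Finset.sum_le_sum fun k hk => ?_
            have h : (ε n k)^2 ≤ δ^2 := by
              rw [← sq_abs]
              exact pow_le_pow_left₀ (abs_nonneg _) (hεb k hk) 2
            exact mul_le_mul_of_nonneg_right h (hBnn n k)
        _ = δ^2 := by rw [← Finset.mul_sum, hB0, mul_one]
    calc (T1 n)^2 ≤ (∑ k ∈ Finset.range (n+1), ((k:ℝ) - n*r)^2 * B n k)
          * ∑ k ∈ Finset.range (n+1), (ε n k)^2 * B n k := hcs
      _ ≤ ((n:ℝ)*r*(1-r)) * δ^2 := by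
          rw [hB2]
          exact mul_le_mul_of_nonneg_left hg hσpos.le
      _ = δ^2 * ((n:ℝ)*r*(1-r)) := by ring
  rw [Real.dist_eq]
  have hdiv : V n / ((n:ℝ)*r*(1-r)) - 1 = (T2 n - (T1 n)^2) / ((n:ℝ)*r*(1-r)) := by
    rw [hVeq, eq_div_iff hσpos.ne', sub_mul, div_mul_cancel₀ _ hσpos.ne']
    ring
  rw [hdiv, abs_div, abs_of_pos hσpos, div_lt_iff₀ hσpos]
  have habs : |T2 n - (T1 n)^2| ≤ |T2 n| + (T1 n)^2 := by
    have h := abs_add_le (T2 n) (-((T1 n)^2))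
    rw [abs_neg, abs_of_nonneg (sq_nonneg (T1 n))] at h
    simpa [sub_eq_add_neg] using h
  have hδδ : δ + δ^2 < e := by nlinarith
  calc |T2 n - (T1 n)^2| ≤ (δ + δ^2) * ((n:ℝ)*r*(1-r)) := by
        rw [add_mul]; linarith
    _ < e * ((n:ℝ)*r*(1-r)) := mul_lt_mul_of_pos_right hδδ hσpos
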